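/- Let n be a natural number and set M_i := n + 2 − i for i = 1, ..., n+1. Define sequences A and B on {1, ..., n+1} by A_{n+1} = B_{n+1} = 1 and, for 1 ≤ i ≤ n, B_i = B_{i+1} + M_{i+1} + 1 and A_i = A_{i+1} + M_{i+1}(M_{i+1}+1) + (M_{i+1}+1)(M_{i+1}+2)/2 − B_{i+1}. Then A_i ≥ B_i for all i ∈ {1, ..., n+1}. -/
import Mathlib


theorem stmt_11 (n : ℕ) (M A B : ℕ → ℚ)
    (hM : ∀ i, M i = (n : ℚ) + 2 - (i : ℚ))
    (hAtop : A (n + 1) = 1) (hBtop : B (n + 1) = 1)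
    (hBrec : ∀ i, 1 ≤ i → i ≤ n → B i = B (i + 1) + M (i + 1) + 1)
    (hArec : ∀ i, 1 ≤ i → i ≤ n →
      A i = A (i + 1) + M (i + 1) * (M (i + 1) + 1)
          + (M (i + 1) + 1) * (M (i + 1) + 2) / 2 - B (i + 1)) :
    ∀ i, 1 ≤ i → i ≤ n + 1 → B i ≤ A i := by
  have key : ∀ d : ℕ, d ≤ n →
      B (n + 1 - d) = ((d : ℚ) + 1) * ((d : ℚ) + 2) / 2 ∧ B (n + 1 - d) ≤ A (n + 1 - d) := by
    intro d
    induction d with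
    | zero =>
      intro _
      simp only [Nat.sub_zero, Nat.cast_zero]
      rw [hBtop, hAtop]
      norm_num
    | succ d ih =>
      intro hd
      have hd' : d ≤ n := Nat.le_of_succ_le hd
      obtain ⟨hBeq, hle⟩ := ih hd'
      set i := n - d with hi
      have hi1 : 1 ≤ i := Nat.le_sub_of_add_le (by omega)
      have hi2 : i ≤ n := Nat.sub_le _ _
      have hsucc : i + 1 = n + 1 - d := by omega
      have hnd : n + 1 - (d + 1) = i := by omega
      have hcast : ((i + 1 : ℕ) : ℚ) = (n : ℚ) + 1 - (d : ℚ) := by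
        push_cast [Nat.sub_add_cancel, hi]
        rw [Nat.cast_sub hd']
        ring
      have hMval : M (i + 1) = (d : ℚ) + 1 := by
        rw [hM, hcast]; ring
      have hB : B i = B (i + 1) + M (i + 1) + 1 := hBrec i hi1 hi2
      have hA := hArec i hi1 hi2
      rw [hnd]
      rw [hsucc] at hB hA hMval
      rw [hBeq, hMval] at hB hA
      rw [hBeq] at hle
      constructor
      · rw [hB]; push_cast; ring
      · rw [hB, hA]
        nlinarith [hle, sq_nonneg ((d : ℚ) + 1)]
  intro i h1 h2
  have hd : n + 1 - i ≤ n := by omega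
  have := key (n + 1 - i) hd
  rw [Nat.sub_sub_self h2] at this
  exact this.2
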